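/- arXiv:1212.1759 — 2 statements merged into one kernel-verified Lean document; each statement's English description precedes it below -/
import Mathlib

section
/- For every i ≥ 1, every word x with at least i occurrences of `true`, and every word y: ⟨a_{p,i}* x | y⟩ = ⟨x | a_{p,i+1} y⟩, where the right side is 0 if y has fewer than i+1 occurrences of `true`. That is, the *-adjoint of doubling the i-th pawn is deleting the (i+1)-th pawn. -/
/-- A single pawn move: a pawn (`true`) advances one square rightward into an
empty square (`false`). -/
def PawnMove (w₀ w₁ : List Bool) : Prop :=
  ∃ u v : List Bool, w₀ = u ++ [true, false] ++ v ∧ w₁ = u ++ [false, true] ++ v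

/-- Reachability: the reflexive-transitive closure of the single-move relation. -/
def Reach : List Bool → List Bool → Prop :=
  Relation.ReflTransGen PawnMove

/-- The `ZMod 2` pairing `⟨w₀|w₁⟩`: `1` if `w₁` is reachable from `w₀`, else `0`. -/
noncomputable def pairing (w₀ w₁ : List Bool) : ZMod 2 :=
  open Classical in if Reach w₀ w₁ then 1 else 0

/-- Pairing extended to `Option`: any pairing in which one argument is `0`
(i.e. `none`) equals `0`. -/
noncomputable def pairingO : Option (List Bool) → Option (List Bool) → ZMod 2
  | some x, some y => pairing x y
  | none, _ => 0
  | _, none => 0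

/-- `delOcc b i w` deletes the `i`-th occurrence (counted from the left,
starting at `1`) of `b` in `w`; it is `none` (i.e. `0`) if `w` has fewer than
`i` occurrences of `b`. -/
def delOcc (b : Bool) : ℕ → List Bool → Option (List Bool)
  | _, [] => none
  | i, a :: w =>
    if a = b then
      if i = 1 then some w
      else Option.map (List.cons a) (delOcc b (i - 1) w)
    else Option.map (List.cons a) (delOcc b i w)

/-- `dblOcc b i w` doubles the `i`-th occurrence (counted from the left,
starting at `1`) of `b` in `w`, i.e. inserts an additional `b` immediately
before it; it is `none` (i.e. `0`) if `w` has fewer than `i` occurrences of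
`b`. -/
def dblOcc (b : Bool) : ℕ → List Bool → Option (List Bool)
  | _, [] => none
  | i, a :: w =>
    if a = b then
      if i = 1 then some (b :: a :: w)
      else Option.map (List.cons a) (dblOcc b (i - 1) w)
    else Option.map (List.cons a) (dblOcc b i w)

/-!
Deleting the `k`-th pawn and doubling the `k`-th pawn both preserve reachability: after either
operation a single move becomes zero, one or two moves, because pawns never overtake one another.
Deleting pawn `i + 1` of `a_{p,i}* x` gives back `x`, so if `y` is reachable from `a_{p,i}* x`
then `a_{p,i+1} y` is reachable from `x`. Conversely, doubling pawn `i` of `a_{p,i+1} y` gives a word from which `y` is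
reached by sliding the new pawn right, across empty squares, to the square of pawn `i + 1` in `y`.
-/

open Relation

namespace Option.Rel

variable {α β γ δ : Type*}

protected theorem refl {r : α → α → Prop} (hr : ∀ a, r a a) (o : Option α) : Option.Rel r o o := by
  cases o <;> simp [hr]

protected theorem trans {r : α → α → Prop} (hr : ∀ {a b c}, r a b → r b c → r a c)
    {o₁ o₂ o₃ : Option α} : Option.Rel r o₁ o₂ → Option.Rel r o₂ o₃ → Option.Rel r o₁ o₃
  | .some h₁, .some h₂ => .some (hr h₁ h₂)
  | .none, .none => .none

protected theorem map {r : α → β → Prop} {s : γ → δ → Prop} {f : α → γ} {g : β → δ}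
    {o : Option α} {o' : Option β} (h : Option.Rel r o o') (hfg : ∀ {a b}, r a b → s (f a) (g b)) :
    Option.Rel s (o.map f) (o'.map g) := by
  cases h <;> simp [*]

theorem exists_eq_some {r : α → β → Prop} {a : α} {o : Option β}
    (h : Option.Rel r (Option.some a) o) : ∃ b, o = Option.some b ∧ r a b := by
  cases h
  exact ⟨_, rfl, ‹_›⟩

end Option.Rel

theorem Option.rel_map_map {α β : Type*} {r : β → β → Prop} (o : Option α) {f g : α → β}
    (h : ∀ a, r (f a) (g a)) : Option.Rel r (o.map f) (o.map g) := by
  cases o <;> simp [h]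

theorem Relation.ReflTransGen.option_rel_lift {α β : Type*} {r : α → α → Prop}
    {p : β → β → Prop} {f : α → Option β}
    (hf : ∀ a b, r a b → Option.Rel (ReflTransGen p) (f a) (f b)) {a b : α}
    (h : ReflTransGen r a b) : Option.Rel (ReflTransGen p) (f a) (f b) := by
  induction h with
  | refl => exact Option.Rel.refl (fun _ => .refl) _
  | tail _ hmove ih => exact ih.trans (fun h₁ h₂ => h₁.trans h₂) (hf _ _ hmove)

theorem PawnMove.cons {w w' : List Bool} (a : Bool) (h : PawnMove w w') :
    PawnMove (a :: w) (a :: w') := by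
  obtain ⟨u, v, rfl, rfl⟩ := h
  exact ⟨a :: u, v, rfl, rfl⟩

theorem pawnMove_true_false (v : List Bool) : PawnMove (true :: false :: v) (false :: true :: v) :=
  ⟨[], v, rfl, rfl⟩

theorem Reach.refl (w : List Bool) : Reach w w :=
  ReflTransGen.refl

theorem Reach.trans {w₁ w₂ w₃ : List Bool} : Reach w₁ w₂ → Reach w₂ w₃ → Reach w₁ w₃ :=
  ReflTransGen.trans

theorem Reach.single {w w' : List Bool} (h : PawnMove w w') : Reach w w' :=
  ReflTransGen.single h

theorem Reach.cons {w w' : List Bool} (a : Bool) (h : Reach w w') : Reach (a :: w) (a :: w') :=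
  ReflTransGen.lift (a :: ·) (fun _ _ => PawnMove.cons a) _ _ h

theorem PawnMove.delOcc_rel (k : ℕ) {w w' : List Bool} (h : PawnMove w w') :
    Option.Rel Reach (delOcc true k w) (delOcc true k w') := by
  obtain ⟨u, v, rfl, rfl⟩ := h
  induction u generalizing k with
  | nil =>
    by_cases hk : k = 1
    · simpa [delOcc, hk] using Reach.refl _
    · simpa [delOcc, hk, Function.comp_def] using
        Option.rel_map_map (delOcc true (k - 1) v) fun _ => Reach.single (pawnMove_true_false _)
  | cons a u ih =>
    by_cases ha : a = true
    · by_cases hk : k = 1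
      · simpa [delOcc, ha, hk] using Reach.single ⟨u, v, rfl, rfl⟩
      · simpa [delOcc, ha, hk] using (ih (k - 1)).map (Reach.cons true)
    · simpa [delOcc, ha] using (ih k).map (Reach.cons a)

theorem PawnMove.dblOcc_rel (k : ℕ) {w w' : List Bool} (h : PawnMove w w') :
    Option.Rel Reach (dblOcc true k w) (dblOcc true k w') := by
  obtain ⟨u, v, rfl, rfl⟩ := h
  induction u generalizing k with
  | nil =>
    by_cases hk : k = 1
    · simpa [dblOcc, hk] using
        ((Reach.single (pawnMove_true_false v)).cons true).trans
          (Reach.single (pawnMove_true_false (true :: v)))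
    · simpa [dblOcc, hk, Function.comp_def] using
        Option.rel_map_map (dblOcc true (k - 1) v) fun _ => Reach.single (pawnMove_true_false _)
  | cons a u ih =>
    by_cases ha : a = true
    · by_cases hk : k = 1
      · simpa [dblOcc, ha, hk] using Reach.single ⟨true :: true :: u, v, rfl, rfl⟩
      · simpa [dblOcc, ha, hk] using (ih (k - 1)).map (Reach.cons true)
    · simpa [dblOcc, ha] using (ih k).map (Reach.cons a)

theorem Reach.delOcc_rel (k : ℕ) {w w' : List Bool} (h : Reach w w') :
    Option.Rel Reach (delOcc true k w) (delOcc true k w') :=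
  ReflTransGen.option_rel_lift (r := PawnMove) (fun _ _ => PawnMove.delOcc_rel k) h

theorem Reach.dblOcc_rel (k : ℕ) {w w' : List Bool} (h : Reach w w') :
    Option.Rel Reach (dblOcc true k w) (dblOcc true k w') :=
  ReflTransGen.option_rel_lift (r := PawnMove) (fun _ _ => PawnMove.dblOcc_rel k) h

theorem dblOcc_zero (b : Bool) (w : List Bool) : dblOcc b 0 w = none := by
  induction w with
  | nil => rfl
  | cons a w ih => simp [dblOcc, ih]

theorem exists_dblOcc_eq_some (b : Bool) {i : ℕ} {w : List Bool} (hi : 1 ≤ i)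
    (hw : i ≤ w.count b) : ∃ z, dblOcc b i w = some z := by
  induction w generalizing i with
  | nil => simp at hw; omega
  | cons a w ih =>
    by_cases ha : a = b
    · subst ha
      by_cases h1 : i = 1
      · simp [dblOcc, h1]
      · obtain ⟨z, hz⟩ := ih (i := i - 1) (by omega) (by simp at hw; omega)
        simp [dblOcc, h1, hz]
    · obtain ⟨z, hz⟩ := ih hi (by simpa [List.count_cons, ha] using hw)
      simp [dblOcc, ha, hz]

theorem delOcc_succ_of_dblOcc (b : Bool) {i : ℕ} {w z : List Bool} (h : dblOcc b i w = some z) :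
    delOcc b (i + 1) z = some w := by
  induction w generalizing i z with
  | nil => simp [dblOcc] at h
  | cons a w ih =>
    by_cases ha : a = b
    · subst ha
      rcases i with _ | _ | i
      · simp [dblOcc_zero] at h
      · simp only [dblOcc, ↓reduceIte, zero_add, Option.some.injEq] at h
        simp [← h, delOcc]
      · simp only [dblOcc, ↓reduceIte, Nat.reduceEqDiff, Nat.add_one_sub_one,
          Option.map_eq_some_iff] at h
        obtain ⟨z', hz', rfl⟩ := h
        simp [delOcc, ih hz']
    · simp only [dblOcc, ha, ↓reduceIte, Option.map_eq_some_iff] at h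
      obtain ⟨z', hz', rfl⟩ := h
      simp [delOcc, ha, ih hz']

theorem reach_true_cons_of_delOcc_one {w z : List Bool} (h : delOcc true 1 w = some z) :
    Reach (true :: z) w := by
  induction w generalizing z with
  | nil => simp [delOcc] at h
  | cons a w ih =>
    cases a
    · simp only [delOcc, Bool.false_eq_true, ↓reduceIte, Option.map_eq_some_iff] at h
      obtain ⟨z', hz', rfl⟩ := h
      exact (Reach.single (pawnMove_true_false z')).trans ((ih hz').cons false)
    · simp only [delOcc, ↓reduceIte, Option.some.injEq] at h
      subst h
      exact Reach.refl _

theorem reach_of_dblOcc_delOcc_succ {i : ℕ} {w w' z : List Bool}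
    (hdel : delOcc true (i + 1) w = some w') (hdbl : dblOcc true i w' = some z) : Reach z w := by
  induction w generalizing i w' z with
  | nil => simp [delOcc] at hdel
  | cons a w ih =>
    cases a
    · simp only [delOcc, Bool.false_eq_true, ↓reduceIte, Option.map_eq_some_iff] at hdel
      obtain ⟨w'', hw'', rfl⟩ := hdel
      simp only [dblOcc, Bool.false_eq_true, ↓reduceIte, Option.map_eq_some_iff] at hdbl
      obtain ⟨z', hz', rfl⟩ := hdbl
      exact (ih hw'' hz').cons false
    · rcases i with _ | _ | i
      · simp [dblOcc_zero] at hdbl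
      · simp only [delOcc, ↓reduceIte, Nat.reduceEqDiff, Nat.add_one_sub_one,
          Option.map_eq_some_iff] at hdel
        obtain ⟨w'', hw'', rfl⟩ := hdel
        simp only [dblOcc, ↓reduceIte, zero_add, Option.some.injEq] at hdbl
        subst hdbl
        exact (reach_true_cons_of_delOcc_one hw'').cons true
      · simp only [delOcc, ↓reduceIte, Nat.reduceEqDiff, Nat.add_one_sub_one,
          Option.map_eq_some_iff] at hdel
        obtain ⟨w'', hw'', rfl⟩ := hdel
        simp only [dblOcc, ↓reduceIte, Nat.reduceEqDiff, Nat.add_one_sub_one,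
          Option.map_eq_some_iff] at hdbl
        obtain ⟨z', hz', rfl⟩ := hdbl
        exact (ih hw'' hz').cons true

theorem pairing_congr {w₁ w₂ w₃ w₄ : List Bool} (h : Reach w₁ w₂ ↔ Reach w₃ w₄) :
    pairing w₁ w₂ = pairing w₃ w₄ := by
  simp only [pairing]
  congr 1
  exact propext h

/-- The `*`-adjoint of doubling the `i`-th pawn is deleting the `(i+1)`-th
pawn: `⟨a_{p,i}* x | y⟩ = ⟨x | a_{p,i+1} y⟩`. -/
theorem dbl_del_pawn_adjoint (i : ℕ) (hi : 1 ≤ i) (x : List Bool)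
    (hx : i ≤ x.count true) (y : List Bool) :
    pairingO (dblOcc true i x) (some y) = pairingO (some x) (delOcc true (i + 1) y) := by
  obtain ⟨x', hx'⟩ := exists_dblOcc_eq_some true hi hx
  have hdel : delOcc true (i + 1) x' = some x := delOcc_succ_of_dblOcc true hx'
  rw [hx']
  cases hy : delOcc true (i + 1) y with
  | none =>
    have hunreach : ¬Reach x' y := fun h => by simpa [hdel, hy] using h.delOcc_rel (i + 1)
    simp [pairingO, pairing, hunreach]
  | some y' =>
    have hreach : Reach x' y ↔ Reach x y' := by
      refine ⟨fun h => by simpa [hdel, hy] using h.delOcc_rel (i + 1), fun h => ?_⟩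
      obtain ⟨z, hz, hx'z⟩ := (hx' ▸ h.dblOcc_rel i).exists_eq_some
      exact hx'z.trans (reach_of_dblOcc_delOcc_succ hy hz)
    exact pairing_congr hreach
end

section
/- The *-adjoint of deleting the first anti-pawn is initial anti-pawn creation: for all words x and y, ⟨a_{q,1} x | y⟩ = ⟨x | a_{q,0}† y⟩. Explicitly: if x contains at least one `false` entry then ⟨x′ | y⟩ = ⟨x | false :: y⟩, where x′ is x with its leftmost `false` entry deleted; and if x contains no `false` entry then ⟨x | false :: y⟩ = 0. -/
lemma pawnMove_cons (c : Bool) {a b : List Bool} (h : PawnMove a b) :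
    PawnMove (c :: a) (c :: b) := by
  obtain ⟨u, v, h₀, h₁⟩ := h
  exact ⟨c :: u, v, by simp [h₀], by simp [h₁]⟩

lemma reach_cons (c : Bool) {a b : List Bool} (h : Reach a b) :
    Reach (c :: a) (c :: b) := by
  induction h with
  | refl => exact Relation.ReflTransGen.refl
  | tail _ hstep ih => exact ih.tail (pawnMove_cons c hstep)

lemma pawnMove_count {a b : List Bool} (h : PawnMove a b) :
    a.count false = b.count false := by
  obtain ⟨u, v, h₀, h₁⟩ := h
  subst h₀ h₁
  simp [List.count_append]

lemma reach_count {a b : List Bool} (h : Reach a b) :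
    a.count false = b.count false := by
  induction h with
  | refl => rfl
  | tail _ hstep ih => exact ih.trans (pawnMove_count hstep)

/-- The first `false` can migrate to the front. -/
lemma reach_fwd : ∀ x : List Bool, false ∈ x → Reach x (false :: x.erase false)
  | [], h => by simp at h
  | false :: x', _ => by
      rw [List.erase_cons_head]
      exact Relation.ReflTransGen.refl
  | true :: x', h => by
      have hx' : false ∈ x' := by simpa using h
      have ih := reach_fwd x' hx'
      have h1 : Reach (true :: x') (true :: false :: x'.erase false) :=
        reach_cons true ih
      have h2 : PawnMove (true :: false :: x'.erase false)
          (false :: true :: x'.erase false) :=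
        ⟨[], x'.erase false, rfl, rfl⟩
      have : (true :: x').erase false = true :: x'.erase false := by
        simp [List.erase_cons]
      rw [this]
      exact h1.tail h2

lemma reach_back {x y : List Bool} (h : Reach x (false :: y)) :
    Reach (x.erase false) y := by
  induction h using Relation.ReflTransGen.head_induction_on with
  | refl =>
      rw [List.erase_cons_head]
      exact Relation.ReflTransGen.refl
  | head hstep _ ih =>
      rename_i a c
      obtain ⟨u, v, h₀, h₁⟩ := hstep
      subst h₀ h₁
      by_cases hu : false ∈ u
      · refine Relation.ReflTransGen.head ?_ ih
        rw [List.append_assoc, List.append_assoc, List.erase_append_left _ hu,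
          List.erase_append_left _ hu]
        exact ⟨u.erase false, v, by simp, by simp⟩
      · have e₀ : (u ++ [true, false] ++ v).erase false
            = u ++ true :: v := by
          rw [List.append_assoc, List.erase_append_right _ hu]
          simp [List.erase_cons]
        have e₁ : (u ++ [false, true] ++ v).erase false
            = u ++ true :: v := by
          rw [List.append_assoc, List.erase_append_right _ hu]
          simp
        rw [e₀, ← e₁]
        exact ih

/-- The `*`-adjoint of deleting the first anti-pawn is initial anti-pawn
creation: `⟨a_{q,1} x | y⟩ = ⟨x | a_{q,0}† y⟩`. If `x` contains a `false`
then `⟨x.erase false | y⟩ = ⟨x | false :: y⟩`; otherwise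
`⟨x | false :: y⟩ = 0`. -/
theorem del_first_antipawn_adjoint :
    (∀ x y : List Bool, false ∈ x →
      pairing (x.erase false) y = pairing x (false :: y)) ∧
    (∀ x y : List Bool, false ∉ x → pairing x (false :: y) = 0) := by
  constructor
  · intro x y hx
    have hiff : Reach (x.erase false) y ↔ Reach x (false :: y) := by
      constructor
      · intro h
        exact (reach_fwd x hx).trans (reach_cons false h)
      · exact reach_back
    simp only [pairing]
    by_cases h : Reach x (false :: y)
    · rw [if_pos (hiff.mpr h), if_pos h]
    · rw [if_neg (fun hh => h (hiff.mp hh)), if_neg h]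
  · intro x y hx
    have : ¬ Reach x (false :: y) := by
      intro h
      have hc := reach_count h
      simp [List.count_cons, List.count_eq_zero_of_not_mem hx] at hc
    simp [pairing, this]
end
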